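/- arXiv:1101.3730 — 2 statements merged into one kernel-verified Lean document; each statement's English description precedes it below -/
import Mathlib

section
/- For the Hahn-type parameters: fix λ > 0 and τ ∈ (−√3 λ/2, 0), set c = 2/(2 + λ + 2τ/√3) and A = (−τ/√3)·c. Then with β = √(c'(1−c')(2A+c')(2A+c'+1)) / (2(A+c')) evaluated at c' = 1 − c, the rescaled band endpoint satisfies (2/c)·β = √(λ+1) · √(1 − (2τ/(√3 λ))²). In particular the points (τ, ±(2/c)β) lie on the ellipse x²/( (√3λ/2)² ) + y²/(λ+1) = 1. -/
/-!
Write `u = τ/√3` and `D = 2 + λ + 2u`, so that `c = 2/D`, `A = -u c` and `c' = 1 - c = (λ + 2u)/D`.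
Every factor of the Hahn endpoint formula then becomes a linear form over `D`:
`1 - c' = 2/D`, `2A + c' = (λ - 2u)/D`, `2A + c' + 1 = 2(λ + 1)/D`, `A + c' = λ/D`.
Hence `(2/c) β = D β = √((λ + 1)(λ² - 4u²)) / λ = √(λ + 1) √(1 - (2u/λ)²)`,
and `2u/λ = τ/(√3λ/2)` is exactly the abscissa normalised by the horizontal semi-axis.
-/

open Real

noncomputable def hahnBandEndpoint (A c : ℝ) : ℝ :=
  √(c * (1 - c) * (2 * A + c) * (2 * A + c + 1)) / (2 * (A + c))

lemma hahnBandEndpoint_dual_mul (lam u : ℝ) (hlam : lam ≠ 0) (hD : 2 + lam + 2 * u ≠ 0) :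
    (2 + lam + 2 * u) *
        hahnBandEndpoint (-u * (2 / (2 + lam + 2 * u))) (1 - 2 / (2 + lam + 2 * u)) =
      √((lam + 1) * (lam ^ 2 - 4 * u ^ 2)) / lam := by
  set D := 2 + lam + 2 * u with hD_def
  have hradicand : (1 - 2 / D) * (1 - (1 - 2 / D)) * (2 * (-u * (2 / D)) + (1 - 2 / D)) *
      (2 * (-u * (2 / D)) + (1 - 2 / D) + 1) =
      (lam + 1) * (lam ^ 2 - 4 * u ^ 2) * (2 / D ^ 2) ^ 2 := by
    field_simp
    rw [hD_def]
    ring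
  have hdenom : 2 * (-u * (2 / D) + (1 - 2 / D)) = 2 * lam / D := by
    field_simp
    rw [hD_def]
    ring
  rw [hahnBandEndpoint, hradicand, hdenom, sqrt_mul' _ (sq_nonneg _), sqrt_sq (by positivity)]
  field_simp

lemma sqrt_mul_sqrt_one_sub_sq_div (lam u : ℝ) (hlam : 0 < lam) :
    √(lam + 1) * √(1 - (2 * u / lam) ^ 2) = √((lam + 1) * (lam ^ 2 - 4 * u ^ 2)) / lam := by
  have h : 1 - (2 * u / lam) ^ 2 = (lam ^ 2 - 4 * u ^ 2) / lam ^ 2 := by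
    field_simp
    ring
  rw [h, ← sqrt_mul (by linarith), mul_div_assoc', sqrt_div' _ (sq_nonneg _), sqrt_sq hlam.le]

lemma sq_div_add_sq_sqrt_mul_sqrt_div (t a b : ℝ) (ha : a ≠ 0) (hb : 0 < b) (hta : t ^ 2 ≤ a ^ 2) :
    t ^ 2 / a ^ 2 + (√b * √(1 - (t / a) ^ 2)) ^ 2 / b = 1 := by
  have hx : 0 ≤ 1 - (t / a) ^ 2 := by
    rw [div_pow, sub_nonneg, div_le_one (by positivity)]
    exact hta
  rw [mul_pow, sq_sqrt hb.le, sq_sqrt hx, div_pow]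
  field_simp
  ring

/-- The rescaled Hahn band endpoint lies on the inscribed ellipse of the
rescaled hexagon. -/
theorem arctic_ellipse
    (lam τ : ℝ) (hlam : 0 < lam)
    (hτ : τ ∈ Set.Ioo (-(Real.sqrt 3 * lam / 2)) 0)
    (c : ℝ) (hc : c = 2 / (2 + lam + 2 * τ / Real.sqrt 3))
    (A : ℝ) (hA : A = (-τ / Real.sqrt 3) * c)
    (c' : ℝ) (hc' : c' = 1 - c)
    (β : ℝ)
    (hβ : β = Real.sqrt (c' * (1 - c') * (2 * A + c') * (2 * A + c' + 1)) /
      (2 * (A + c'))) :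
    (2 / c) * β = Real.sqrt (lam + 1) *
        Real.sqrt (1 - (2 * τ / (Real.sqrt 3 * lam)) ^ 2) ∧
      τ ^ 2 / (Real.sqrt 3 * lam / 2) ^ 2 + ((2 / c) * β) ^ 2 / (lam + 1) = 1 := by
  obtain ⟨hτ_lower, hτ_neg⟩ := hτ
  have hs : (0 : ℝ) < √3 := by positivity
  obtain ⟨u, rfl⟩ : ∃ u, τ = √3 * u := ⟨τ / √3, by field_simp⟩
  have hu_lower : -lam < 2 * u := by nlinarith
  have hD : 2 + lam + 2 * u ≠ 0 := by linarith
  have hendpoint : (2 / c) * β = √(lam + 1) * √(1 - (2 * (√3 * u) / (√3 * lam)) ^ 2) := by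
    have hDu : 2 + lam + 2 * (√3 * u) / √3 = 2 + lam + 2 * u := by field_simp
    have hAu : -(√3 * u) / √3 = -u := by field_simp
    have hx : 2 * (√3 * u) / (√3 * lam) = 2 * u / lam := by field_simp
    rw [hβ, hc', hA, hc, hDu, hAu, div_div_cancel₀ two_ne_zero, hx,
      sqrt_mul_sqrt_one_sub_sq_div lam u hlam, ← hahnBandEndpoint_dual_mul lam u hlam.ne' hD,
      hahnBandEndpoint]
  refine ⟨hendpoint, ?_⟩
  have hx : 2 * (√3 * u) / (√3 * lam) = √3 * u / (√3 * lam / 2) := by field_simp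
  rw [hendpoint, hx]
  refine sq_div_add_sq_sqrt_mul_sqrt_div _ _ _ (by positivity) (by linarith) ?_
  nlinarith
end

section
/- Let K^sym(x,y) = K_{2k}(x,y) − K_{2k}(x,−y) on Y, where K_{2k} is the projection kernel onto span{√w p_0,...,√w p_{2k−1}} in ℓ²(Y ∪ (−Y)) with even weight w. Then K^sym is itself a projection kernel on ℓ²(Y) of rank k: Σ_{z∈Y} K^sym(x,z)K^sym(z,y) = K^sym(x,y) and Σ_{x∈Y} K^sym(x,x) = k. -/
/-!
Because `w` is even and `p n` has the parity of `n`, the term `p n x * p n (-y)` equals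
`(-1)^n p n x * p n y`, so in `K_{2k}(x,y) - K_{2k}(x,-y)` the even-degree terms cancel and the
odd-degree ones double: `K^sym(x,y) = ∑_{j<k} φ_j(x) φ_j(y)` with `φ_j = √(2w) p_{2j+1}`.
For odd `m, n` the summand `w p_m p_n` is even, so its sum over `Y ∪ (-Y)` is twice its sum
over `Y`; hence the `φ_j` are orthonormal in `ℓ²(Y)`, and the kernel of a finite orthonormal
family is a projection whose trace is the size of the family.
-/

open Finset Polynomial

section OrthoKernel

variable {α ι : Type*}

def orthoKernel (s : Finset ι) (φ : ι → α → ℝ) (x y : α) : ℝ :=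
  ∑ i ∈ s, φ i x * φ i y

variable [DecidableEq ι]

def OrthonormalOn (Y : Finset α) (s : Finset ι) (φ : ι → α → ℝ) : Prop :=
  ∀ i ∈ s, ∀ j ∈ s, ∑ z ∈ Y, φ i z * φ j z = if i = j then 1 else 0

variable {Y : Finset α} {s : Finset ι} {φ : ι → α → ℝ}

theorem OrthonormalOn.sum_orthoKernel_mul_orthoKernel (hφ : OrthonormalOn Y s φ) (x y : α) :
    ∑ z ∈ Y, orthoKernel s φ x z * orthoKernel s φ z y = orthoKernel s φ x y := by
  calc ∑ z ∈ Y, orthoKernel s φ x z * orthoKernel s φ z y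
      = ∑ i ∈ s, ∑ j ∈ s, φ i x * φ j y * ∑ z ∈ Y, φ i z * φ j z := by
        simp only [orthoKernel, sum_mul_sum]
        rw [sum_comm]
        refine sum_congr rfl fun i _ => ?_
        rw [sum_comm]
        refine sum_congr rfl fun j _ => ?_
        rw [mul_sum]
        exact sum_congr rfl fun z _ => by ring
    _ = orthoKernel s φ x y := by
        refine sum_congr rfl fun i hi => ?_
        rw [sum_congr rfl fun j hj => by rw [hφ i hi j hj]]
        simp [hi]

theorem OrthonormalOn.sum_orthoKernel_diag (hφ : OrthonormalOn Y s φ) :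
    ∑ x ∈ Y, orthoKernel s φ x x = s.card := by
  simp only [orthoKernel]
  rw [sum_comm, card_eq_sum_ones, Nat.cast_sum]
  exact sum_congr rfl fun i hi => by simpa using hφ i hi i hi

end OrthoKernel

theorem Finset.sum_range_two_mul {M : Type*} [AddCommMonoid M] (f : ℕ → M) (k : ℕ) :
    ∑ n ∈ range (2 * k), f n = ∑ j ∈ range k, (f (2 * j) + f (2 * j + 1)) := by
  induction k with
  | zero => simp
  | succ k ih => rw [Nat.mul_succ, sum_range_succ, sum_range_succ, ih, sum_range_succ, add_assoc]

theorem sum_union_image_neg_of_even {Y : Finset ℝ} (hY : ∀ y ∈ Y, 0 < y) {f : ℝ → ℝ}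
    (hf : ∀ x, f (-x) = f x) :
    ∑ x ∈ Y ∪ Y.image (fun y => -y), f x = 2 * ∑ y ∈ Y, f y := by
  have hdisj : Disjoint Y (Y.image (fun y => -y)) := by
    simp only [disjoint_left, mem_image, not_exists, not_and]
    intro a ha b hb hba
    linarith [hY a ha, hY b hb]
  rw [sum_union hdisj, sum_image fun a _ b _ h => neg_injective h,
    sum_congr rfl fun y _ => hf y, two_mul]

section OddFamily

variable (w : ℝ → ℝ) (p : ℕ → ℝ[X])

noncomputable def oddFamily (j : ℕ) (x : ℝ) : ℝ :=
  √(2 * w x) * (p (2 * j + 1)).eval x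

variable {w p}

theorem orthonormalOn_oddFamily {Y : Finset ℝ} (hY : ∀ y ∈ Y, 0 < y)
    (hw : ∀ y ∈ Y, 0 ≤ w y) (hweven : ∀ x, w (-x) = w x)
    (hparity : ∀ n x, (p n).eval (-x) = (-1 : ℝ) ^ n * (p n).eval x) {N : ℕ}
    (horth : ∀ i j, i < N → j < N →
      ∑ x ∈ Y ∪ Y.image (fun y => -y), w x * (p i).eval x * (p j).eval x =
        if i = j then 1 else 0)
    {k : ℕ} (hk : 2 * k ≤ N) :
    OrthonormalOn Y (range k) (oddFamily w p) := by
  intro i hi j hj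
  have hodd : ∀ m ∈ range k, 2 * m + 1 < N := fun m hm => by
    have := mem_range.mp hm; omega
  have heven : ∀ x, w (-x) * (p (2 * i + 1)).eval (-x) * (p (2 * j + 1)).eval (-x)
      = w x * (p (2 * i + 1)).eval x * (p (2 * j + 1)).eval x := fun x => by
    rw [hweven, hparity, hparity, (odd_two_mul_add_one i).neg_one_pow,
      (odd_two_mul_add_one j).neg_one_pow]
    ring
  calc ∑ z ∈ Y, oddFamily w p i z * oddFamily w p j z
      = 2 * ∑ z ∈ Y, w z * (p (2 * i + 1)).eval z * (p (2 * j + 1)).eval z := by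
        rw [mul_sum]
        refine sum_congr rfl fun z hz => ?_
        have hsq : √(2 * w z) * √(2 * w z) = 2 * w z :=
          Real.mul_self_sqrt (by linarith [hw z hz])
        simp only [oddFamily]
        linear_combination (p (2 * i + 1)).eval z * (p (2 * j + 1)).eval z * hsq
    _ = if i = j then 1 else 0 := by
        rw [← sum_union_image_neg_of_even hY heven, horth _ _ (hodd i hi) (hodd j hj)]
        simp

theorem sub_kernel_neg_eq_orthoKernel_oddFamily (hweven : ∀ x, w (-x) = w x)
    (hparity : ∀ n x, (p n).eval (-x) = (-1 : ℝ) ^ n * (p n).eval x) (k : ℕ) {x y : ℝ}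
    (hx : 0 ≤ w x) :
    √(w x * w y) * ∑ n ∈ range (2 * k), (p n).eval x * (p n).eval y
        - √(w x * w (-y)) * ∑ n ∈ range (2 * k), (p n).eval x * (p n).eval (-y)
      = orthoKernel (range k) (oddFamily w p) x y := by
  have hsqrt : √(2 * w x) * √(2 * w y) = 2 * √(w x * w y) := by
    rw [← Real.sqrt_mul (by linarith), show 2 * w x * (2 * w y) = 2 ^ 2 * (w x * w y) by ring,
      Real.sqrt_mul (by norm_num), Real.sqrt_sq (by norm_num)]
  rw [hweven, ← mul_sub, ← sum_sub_distrib, sum_range_two_mul, mul_sum, orthoKernel]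
  refine sum_congr rfl fun j _ => ?_
  simp only [oddFamily, hparity, (even_two_mul j).neg_one_pow,
    (odd_two_mul_add_one j).neg_one_pow]
  linear_combination -(p (2 * j + 1)).eval x * (p (2 * j + 1)).eval y * hsqrt

end OddFamily

theorem ksym_is_projection_general
    (Y : Finset ℝ) (hY : ∀ y ∈ Y, 0 < y)
    (X : Finset ℝ) (hX : X = Y ∪ Y.image (fun y => -y))
    (w : ℝ → ℝ) (hwpos : ∀ x ∈ X, 0 < w x)
    (hweven : ∀ x : ℝ, w (-x) = w x)
    (p : ℕ → Polynomial ℝ)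
    (hparity : ∀ n, ∀ x : ℝ, (p n).eval (-x) = (-1 : ℝ) ^ n * (p n).eval x)
    (horth : ∀ i j, i < X.card → j < X.card →
      ∑ x ∈ X, w x * (p i).eval x * (p j).eval x = if i = j then 1 else 0)
    (k : ℕ) (hk : 2 * k ≤ X.card)
    (K2k Ksym : ℝ → ℝ → ℝ)
    (hK2k : ∀ x y : ℝ, K2k x y =
      Real.sqrt (w x * w y) * ∑ n ∈ range (2 * k), (p n).eval x * (p n).eval y)
    (hKsym : ∀ x y : ℝ, Ksym x y = K2k x y - K2k x (-y)) :
    (∀ x ∈ Y, ∀ y ∈ Y, ∑ z ∈ Y, Ksym x z * Ksym z y = Ksym x y) ∧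
      ∑ x ∈ Y, Ksym x x = k := by
  subst hX
  have hw : ∀ y ∈ Y, 0 ≤ w y := fun y hy => (hwpos y (mem_union_left _ hy)).le
  have hφ := orthonormalOn_oddFamily hY hw hweven hparity horth hk
  have hK : ∀ x ∈ Y, ∀ y, Ksym x y = orthoKernel (range k) (oddFamily w p) x y := by
    intro x hx y
    rw [hKsym, hK2k, hK2k, sub_kernel_neg_eq_orthoKernel_oddFamily hweven hparity k (hw x hx)]
  refine ⟨fun x hx y _ => ?_, ?_⟩
  · rw [sum_congr rfl fun z hz => by rw [hK x hx z, hK z hz y], hK x hx y]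
    exact hφ.sum_orthoKernel_mul_orthoKernel x y
  · rw [sum_congr rfl fun x hx => hK x hx x, hφ.sum_orthoKernel_diag, card_range]

/-- The antisymmetrized kernel `K^sym(x,y) = K_{2k}(x,y) - K_{2k}(x,-y)` is a
projection kernel of rank `k` on `ℓ²(Y)`. -/
theorem ksym_is_projection
    (Y : Finset ℝ) (hY : ∀ y ∈ Y, 0 < y)
    (X : Finset ℝ) (hX : X = Y ∪ Y.image (fun y => -y))
    (w : ℝ → ℝ) (hwpos : ∀ x ∈ X, 0 < w x)
    (hweven : ∀ x : ℝ, w (-x) = w x)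
    (p : ℕ → Polynomial ℝ)
    (hdeg : ∀ j, j < X.card → (p j).natDegree = j)
    (hparity : ∀ n, ∀ x : ℝ, (p n).eval (-x) = (-1 : ℝ) ^ n * (p n).eval x)
    (horth : ∀ i j, i < X.card → j < X.card →
      ∑ x ∈ X, w x * (p i).eval x * (p j).eval x = if i = j then 1 else 0)
    (k : ℕ) (hk : 2 * k ≤ X.card)
    (K2k Ksym : ℝ → ℝ → ℝ)
    (hK2k : ∀ x y : ℝ, K2k x y =
      Real.sqrt (w x * w y) * ∑ n ∈ range (2 * k), (p n).eval x * (p n).eval y)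
    (hKsym : ∀ x y : ℝ, Ksym x y = K2k x y - K2k x (-y)) :
    (∀ x ∈ Y, ∀ y ∈ Y, ∑ z ∈ Y, Ksym x z * Ksym z y = Ksym x y) ∧
      ∑ x ∈ Y, Ksym x x = k :=
  ksym_is_projection_general Y hY X hX w hwpos hweven p hparity horth k hk K2k Ksym hK2k hKsym
end
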